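/- arXiv:2109.11784 — 4 statements merged into one kernel-verified Lean document; each statement's English description precedes it below -/
import Mathlib

section
/- Let p ≥ 2 and let A, B, D be pairwise disjoint subsets of {0,1,…,p−1}, where B = {b₀, b₀+1, …, b₀+t₀−1} and D = {d₀, d₀+1, …, d₀+t₁−1} are sets of consecutive integers. For each tuple (j₁,…,j_l) ∈ A^l (l ≥ 1) define the semi-open intervals I^B_{(j₁,…,j_l)} = [Σ_{i=1}^{l} j_i/p^i + b₀/p^{l+1}, Σ_{i=1}^{l} j_i/p^i + (b₀+t₀)/p^{l+1}) and I^D_{(j₁,…,j_l)} = [Σ_{i=1}^{l} j_i/p^i + d₀/p^{l+1}, Σ_{i=1}^{l} j_i/p^i + (d₀+t₁)/p^{l+1}). Then the collection of all these intervals, over all tuples of all lengths l ≥ 1 and both labels B and D, is pairwise disjoint: two such intervals are either equal (same label and same tuple) or disjoint. -/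
/-- The real number with base-`p` digits given by the list `L` after the point. -/
noncomputable def padicSum (p : ℕ) (L : List ℕ) : ℝ :=
  ∑ i ∈ Finset.range L.length, (L.getD i 0 : ℝ) / (p : ℝ) ^ (i + 1)

/-- The semi-open interval indexed by the tuple `L` with digit window `[c, c+t)`. -/
noncomputable def blockInt (p : ℕ) (L : List ℕ) (c t : ℕ) : Set ℝ :=
  Set.Ico (padicSum p L + (c : ℝ) / (p : ℝ) ^ (L.length + 1))
    (padicSum p L + ((c : ℝ) + t) / (p : ℝ) ^ (L.length + 1))

lemma padicSum_nil (p : ℕ) : padicSum p [] = 0 := by simp [padicSum]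

lemma padicSum_cons (p a : ℕ) (L : List ℕ) :
    padicSum p (a :: L) = (a : ℝ) / p + padicSum p L / p := by
  unfold padicSum
  rw [List.length_cons, Finset.sum_range_succ']
  have h : ∀ i : ℕ, ((a :: L).getD (i + 1) 0 : ℝ) / (p : ℝ) ^ (i + 1 + 1)
      = ((L.getD i 0 : ℝ) / (p : ℝ) ^ (i + 1)) / p := fun i => by
    rw [List.getD_cons_succ, div_div, ← pow_succ]
  simp only [h, List.getD_cons_zero, zero_add, pow_one, ← Finset.sum_div]
  ring

lemma mem_blockInt_cons {p a c t : ℕ} (hp : 0 < p) {L : List ℕ} {x : ℝ} :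
    x ∈ blockInt p (a :: L) c t ↔ (p : ℝ) * x - a ∈ blockInt p L c t := by
  have hp0 : (0 : ℝ) < p := by exact_mod_cast hp
  have hq : (0 : ℝ) < (p : ℝ) ^ (L.length + 1) := by positivity
  simp only [blockInt, Set.mem_Ico, padicSum_cons, List.length_cons]
  have h1 : (p : ℝ) * ((a : ℝ) / p + padicSum p L / p + (c : ℝ) / (p : ℝ) ^ (L.length + 1 + 1))
      - a = padicSum p L + (c : ℝ) / (p : ℝ) ^ (L.length + 1) := by
    field_simp
    ring
  have h2 : (p : ℝ) * ((a : ℝ) / p + padicSum p L / p + ((c : ℝ) + t) / (p : ℝ) ^ (L.length + 1 + 1))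
      - a = padicSum p L + ((c : ℝ) + t) / (p : ℝ) ^ (L.length + 1) := by
    field_simp
    ring
  rw [← h1, ← h2]
  constructor
  · rintro ⟨ha, hb⟩
    exact ⟨sub_le_sub_right ((mul_le_mul_iff_right₀ hp0).2 ha) _,
      sub_lt_sub_right ((mul_lt_mul_iff_right₀ hp0).2 hb) _⟩
  · rintro ⟨ha, hb⟩
    exact ⟨(mul_le_mul_iff_right₀ hp0).1 (by linarith), (mul_lt_mul_iff_right₀ hp0).1 (by linarith)⟩

lemma blockInt_subset {p c t : ℕ} (hp : 0 < p) (hct : c + t ≤ p) {L : List ℕ}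
    (hL : ∀ a ∈ L, a < p) : blockInt p L c t ⊆ Set.Ico (0 : ℝ) 1 := by
  have hp0 : (0 : ℝ) < p := by exact_mod_cast hp
  induction L with
  | nil =>
    intro x hx
    simp only [blockInt, padicSum_nil, List.length_nil, zero_add, pow_one, Set.mem_Ico] at hx ⊢
    have hct' : (c : ℝ) + t ≤ p := by exact_mod_cast hct
    constructor
    · have : (0 : ℝ) ≤ (c : ℝ) / p := by positivity
      linarith [hx.1]
    · have : ((c : ℝ) + t) / p ≤ 1 := by
        rw [div_le_one hp0]; exact hct'
      linarith [hx.2]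
  | cons a L ih =>
    intro x hx
    rw [mem_blockInt_cons hp] at hx
    have h01 := ih (fun b hb => hL b (List.mem_cons_of_mem a hb)) hx
    have ha : (a : ℝ) + 1 ≤ p := by exact_mod_cast hL a (List.mem_cons_self)
    simp only [Set.mem_Ico] at h01 ⊢
    have ha0 : (0 : ℝ) ≤ a := by positivity
    constructor
    · nlinarith [h01.1]
    · nlinarith [h01.2]

lemma blockInt_key {p : ℕ} (hp : 2 ≤ p) (A : Finset ℕ) (hA : ∀ a ∈ A, a < p)
    {c₁ t₁ c₂ t₂ : ℕ} (h₁ : c₁ + t₁ ≤ p) (h₂ : c₂ + t₂ ≤ p)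
    (hA1 : ∀ a ∈ A, a ∉ Finset.Ico c₁ (c₁ + t₁))
    (hA2 : ∀ a ∈ A, a ∉ Finset.Ico c₂ (c₂ + t₂)) :
    ∀ L₁ L₂ : List ℕ, (∀ a ∈ L₁, a ∈ A) → (∀ a ∈ L₂, a ∈ A) →
      (blockInt p L₁ c₁ t₁ ∩ blockInt p L₂ c₂ t₂).Nonempty →
      L₁ = L₂ ∧ ¬ Disjoint (Finset.Ico c₁ (c₁ + t₁)) (Finset.Ico c₂ (c₂ + t₂)) := by
  have hp1 : 0 < p := by omega
  have hp0 : (0 : ℝ) < p := by exact_mod_cast hp1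
  intro L₁
  induction L₁ with
  | nil =>
    rintro L₂ hL₁A hL₂A ⟨x, hx₁, hx₂⟩
    simp only [blockInt, padicSum_nil, List.length_nil, zero_add, pow_one, Set.mem_Ico] at hx₁
    have e1 : (c₁ : ℝ) ≤ p * x := by
      rw [← div_le_iff₀' hp0]; exact hx₁.1
    have e2 : (p : ℝ) * x < c₁ + t₁ := by
      rw [← lt_div_iff₀' hp0]; exact_mod_cast hx₁.2
    cases L₂ with
    | nil =>
      simp only [blockInt, padicSum_nil, List.length_nil, zero_add, pow_one, Set.mem_Ico] at hx₂
      have f1 : (c₂ : ℝ) ≤ p * x := by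
        rw [← div_le_iff₀' hp0]; exact hx₂.1
      have f2 : (p : ℝ) * x < c₂ + t₂ := by
        rw [← lt_div_iff₀' hp0]; exact_mod_cast hx₂.2
      have g1 : (c₁ : ℕ) < c₂ + t₂ := by exact_mod_cast lt_of_le_of_lt e1 f2
      have g2 : (c₂ : ℕ) < c₁ + t₁ := by exact_mod_cast lt_of_le_of_lt f1 e2
      have g3 : 0 < t₁ := by
        have : (0 : ℝ) < t₁ := by linarith
        exact_mod_cast this
      have g4 : 0 < t₂ := by
        have : (0 : ℝ) < t₂ := by linarith
        exact_mod_cast this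
      refine ⟨rfl, Finset.not_disjoint_iff.2 ⟨max c₁ c₂, ?_, ?_⟩⟩ <;>
        simp only [Finset.mem_Ico] <;> omega
    | cons a M =>
      exfalso
      rw [mem_blockInt_cons hp1] at hx₂
      have haA : a ∈ A := hL₂A a (List.mem_cons_self)
      have h01 := blockInt_subset hp1 h₂
        (fun b hb => hA b (hL₂A b (List.mem_cons_of_mem a hb))) hx₂
      simp only [Set.mem_Ico] at h01
      have g1 : (c₁ : ℕ) < a + 1 := by
        have : (c₁ : ℝ) < a + 1 := by linarith [h01.2]
        exact_mod_cast this
      have g2 : (a : ℕ) < c₁ + t₁ := by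
        have : (a : ℝ) < c₁ + t₁ := by linarith [h01.1]
        exact_mod_cast this
      exact hA1 a haA (Finset.mem_Ico.2 ⟨by omega, g2⟩)
  | cons a M ih =>
    rintro L₂ hL₁A hL₂A ⟨x, hx₁, hx₂⟩
    rw [mem_blockInt_cons hp1] at hx₁
    have haA : a ∈ A := hL₁A a (List.mem_cons_self)
    have h01 := blockInt_subset hp1 h₁
      (fun b hb => hA b (hL₁A b (List.mem_cons_of_mem a hb))) hx₁
    simp only [Set.mem_Ico] at h01
    cases L₂ with
    | nil =>
      exfalso
      simp only [blockInt, padicSum_nil, List.length_nil, zero_add, pow_one, Set.mem_Ico] at hx₂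
      have f1 : (c₂ : ℝ) ≤ p * x := by
        rw [← div_le_iff₀' hp0]; exact hx₂.1
      have f2 : (p : ℝ) * x < c₂ + t₂ := by
        rw [← lt_div_iff₀' hp0]; exact_mod_cast hx₂.2
      have g1 : (c₂ : ℕ) < a + 1 := by
        have : (c₂ : ℝ) < a + 1 := by linarith [h01.2]
        exact_mod_cast this
      have g2 : (a : ℕ) < c₂ + t₂ := by
        have : (a : ℝ) < c₂ + t₂ := by linarith [h01.1]
        exact_mod_cast this
      exact hA2 a haA (Finset.mem_Ico.2 ⟨by omega, g2⟩)
    | cons b N =>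
      rw [mem_blockInt_cons hp1] at hx₂
      have h02 := blockInt_subset hp1 h₂
        (fun d hd => hA d (hL₂A d (List.mem_cons_of_mem b hd))) hx₂
      simp only [Set.mem_Ico] at h02
      have hab : a = b := by
        have g1 : (a : ℕ) < b + 1 := by
          have : (a : ℝ) < b + 1 := by linarith [h01.1, h02.2]
          exact_mod_cast this
        have g2 : (b : ℕ) < a + 1 := by
          have : (b : ℝ) < a + 1 := by linarith [h02.1, h01.2]
          exact_mod_cast this
        omega
      subst hab
      obtain ⟨hEq, hnd⟩ := ih N (fun d hd => hL₁A d (List.mem_cons_of_mem a hd))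
        (fun d hd => hL₂A d (List.mem_cons_of_mem a hd)) ⟨p * x - a, hx₁, hx₂⟩
      exact ⟨by rw [hEq], hnd⟩

theorem blockInt_pairwise_disjoint (p b₀ t₀ d₀ t₁ : ℕ) (hp : 2 ≤ p) (A : Finset ℕ)
    (hA : ∀ a ∈ A, a < p) (hB : b₀ + t₀ ≤ p) (hD : d₀ + t₁ ≤ p)
    (hAB : ∀ a ∈ A, a ∉ Finset.Ico b₀ (b₀ + t₀))
    (hAD : ∀ a ∈ A, a ∉ Finset.Ico d₀ (d₀ + t₁))
    (hBD : Disjoint (Finset.Ico b₀ (b₀ + t₀)) (Finset.Ico d₀ (d₀ + t₁)))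
    (L₁ L₂ : List ℕ) (hL₁ : L₁ ≠ []) (hL₂ : L₂ ≠ [])
    (hL₁A : ∀ a ∈ L₁, a ∈ A) (hL₂A : ∀ a ∈ L₂, a ∈ A) :
    ((blockInt p L₁ b₀ t₀ ∩ blockInt p L₂ b₀ t₀).Nonempty → L₁ = L₂) ∧
    ((blockInt p L₁ d₀ t₁ ∩ blockInt p L₂ d₀ t₁).Nonempty → L₁ = L₂) ∧
    ((blockInt p L₁ b₀ t₀ ∩ blockInt p L₂ d₀ t₁).Nonempty → False) := by
  refine ⟨fun h => ?_, fun h => ?_, fun h => ?_⟩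
  · exact (blockInt_key hp A hA hB hB hAB hAB L₁ L₂ hL₁A hL₂A h).1
  · exact (blockInt_key hp A hA hD hD hAD hAD L₁ L₂ hL₁A hL₂A h).1
  · exact (blockInt_key hp A hA hB hD hAB hAD L₁ L₂ hL₁A hL₂A h).2 hBD
end

section
/- Let n ≥ 3 be an odd integer and p > n−2 an odd integer ≥ 2, and set m₀ = (p−n+2)/2 (an integer since p and n are both odd). For each tuple (n₁,…,n_l) with n_i ∈ {0,…,n−3} set j_i = n_i + m₀ and define I_{(n₁,…,n_l)} = [Σ_{i=1}^l j_i/p^i, Σ_{i=1}^l j_i/p^i + m₀/p^{l+1}) and J_{(n₁,…,n_l)} = [Σ_{i=1}^l j_i/p^i + (m₀+n−2)/p^{l+1}, Σ_{i=1}^l j_i/p^i + 1/p^l). Let A_k be the set [1/2 − (n−2)/(2p), 1/2 + (n−2)/(2p)) minus the union of all the intervals I and J over all tuples of length at most k. Then the Lebesgue measure of A_k equals ((n−2)/p)^{k+1} for every k ≥ 1. -/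
open Set MeasureTheory

namespace AkAux

lemma padicSum_nil (p : ℕ) : padicSum p [] = 0 := by simp [padicSum]

lemma padicSum_concat (p : ℕ) (L : List ℕ) (d : ℕ) :
    padicSum p (L ++ [d]) = padicSum p L + (d : ℝ) / (p : ℝ) ^ (L.length + 1) := by
  unfold padicSum
  rw [List.length_append, List.length_singleton, Finset.sum_range_succ]
  congr 1
  · exact Finset.sum_congr rfl fun i hi => by
      rw [List.getD_append _ _ _ _ (Finset.mem_range.mp hi)]
  · rw [List.getD_append_right _ _ _ _ le_rfl]
    simp

def val (p : ℕ) (L : List ℕ) : ℕ := L.foldl (fun a d => a * p + d) 0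

lemma val_concat (p : ℕ) (L : List ℕ) (d : ℕ) :
    val p (L ++ [d]) = val p L * p + d := by
  simp [val, List.foldl_append]

lemma padicSum_eq_val (p : ℕ) (hp : 0 < p) (L : List ℕ) :
    padicSum p L = (val p L : ℝ) / (p : ℝ) ^ L.length := by
  have hp' : (p:ℝ) ≠ 0 := Nat.cast_ne_zero.mpr hp.ne'
  induction L using List.reverseRecOn with
  | nil => simp [padicSum_nil, val]
  | append_singleton L d ih =>
    rw [padicSum_concat, ih, val_concat, List.length_append, List.length_singleton]
    push_cast
    field_simp
    ring

lemma val_inj (p : ℕ) : ∀ (L L' : List ℕ), L.length = L'.length →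
    (∀ x ∈ L, x < p) → (∀ x ∈ L', x < p) → val p L = val p L' → L = L' := by
  intro L
  induction L using List.reverseRecOn with
  | nil =>
    intro L' hl _ _ _
    simp only [List.length_nil] at hl
    exact (List.eq_nil_of_length_eq_zero hl.symm).symm
  | append_singleton L d ih =>
    intro L' hl hL hL' hv
    have hne : L' ≠ [] := by
      intro h; subst h; simp at hl
    obtain ⟨B, e, rfl⟩ : ∃ B e, L' = B ++ [e] :=
      ⟨L'.dropLast, L'.getLast hne, (List.dropLast_append_getLast hne).symm⟩
    rw [val_concat, val_concat] at hv
    have hd : d < p := hL d (by simp)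
    have he : e < p := hL' e (by simp)
    have hp0 : 0 < p := lt_of_le_of_lt (Nat.zero_le d) hd
    have hde : d = e := by
      have h1 : (val p L * p + d) % p = d := by
        rw [Nat.add_comm, Nat.add_mul_mod_self_right]; exact Nat.mod_eq_of_lt hd
      have h2 : (val p B * p + e) % p = e := by
        rw [Nat.add_comm, Nat.add_mul_mod_self_right]; exact Nat.mod_eq_of_lt he
      rw [← h1, hv, h2]
    subst hde
    have hval : val p L = val p B :=
      Nat.eq_of_mul_eq_mul_right hp0 (Nat.add_right_cancel hv)
    have hlen : L.length = B.length := by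
      simp only [List.length_append, List.length_singleton] at hl; omega
    rw [ih B hlen (fun x hx => hL x (by simp [hx])) (fun x hx => hL' x (by simp [hx])) hval]

/-! ### The intervals -/

variable (p m₀ q : ℕ)

noncomputable def sf (L : List ℕ) : ℝ := padicSum p (L.map (· + m₀))

noncomputable def Ia (L : List ℕ) : Set ℝ :=
  Ico (sf p m₀ L) (sf p m₀ L + (m₀ : ℝ) / (p : ℝ) ^ (L.length + 1))

noncomputable def Ja (L : List ℕ) : Set ℝ :=
  Ico (sf p m₀ L + ((m₀ + q : ℕ) : ℝ) / (p : ℝ) ^ (L.length + 1))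
    (sf p m₀ L + 1 / (p : ℝ) ^ L.length)

noncomputable def Ma (L : List ℕ) : Set ℝ :=
  Ico (sf p m₀ L + (m₀ : ℝ) / (p : ℝ) ^ (L.length + 1))
    (sf p m₀ L + ((m₀ + q : ℕ) : ℝ) / (p : ℝ) ^ (L.length + 1))

noncomputable def Da (L : List ℕ) : Set ℝ :=
  Ico (sf p m₀ L) (sf p m₀ L + 1 / (p : ℝ) ^ L.length)

lemma sf_nil : sf p m₀ [] = 0 := by simp [sf, padicSum_nil]

lemma sf_concat (L : List ℕ) (d : ℕ) :
    sf p m₀ (L ++ [d]) = sf p m₀ L + ((m₀ : ℝ) + d) / (p : ℝ) ^ (L.length + 1) := by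
  unfold sf
  rw [List.map_append, List.map_singleton, padicSum_concat, List.length_map]
  push_cast
  ring

variable {p m₀ q}

lemma div_pow_le (hp : 0 < p) {a : ℕ} (h : a ≤ p) (l : ℕ) :
    (a : ℝ) / (p : ℝ) ^ (l + 1) ≤ 1 / (p : ℝ) ^ l := by
  have hp' : (0:ℝ) < (p:ℝ) := by exact_mod_cast hp
  rw [div_le_div_iff₀ (by positivity) (by positivity), one_mul, pow_succ]
  have ha : (a:ℝ) ≤ p := by exact_mod_cast h
  nlinarith [pow_pos hp' l]

lemma Ia_subset_Da (hp : 0 < p) (hsum : m₀ + q + m₀ = p) (L : List ℕ) :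
    Ia p m₀ L ⊆ Da p m₀ L :=
  Ico_subset_Ico le_rfl ((add_le_add_iff_left _).mpr (div_pow_le hp (by omega) _))

lemma Ma_subset_Da (hp : 0 < p) (hsum : m₀ + q + m₀ = p) (L : List ℕ) :
    Ma p m₀ q L ⊆ Da p m₀ L := by
  refine Ico_subset_Ico ?_ ((add_le_add_iff_left _).mpr (div_pow_le hp (by omega) _))
  have h : (0:ℝ) ≤ (m₀ : ℝ) / (p : ℝ) ^ (L.length + 1) := by positivity
  linarith

lemma Ja_subset_Da (hp : 0 < p) (hsum : m₀ + q + m₀ = p) (L : List ℕ) :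
    Ja p m₀ q L ⊆ Da p m₀ L := by
  refine Ico_subset_Ico ?_ le_rfl
  have h : (0:ℝ) ≤ ((m₀ + q : ℕ) : ℝ) / (p : ℝ) ^ (L.length + 1) := by positivity
  linarith

lemma Da_partition (hp : 0 < p) (hsum : m₀ + q + m₀ = p) (L : List ℕ) :
    Da p m₀ L = Ia p m₀ L ∪ Ma p m₀ q L ∪ Ja p m₀ q L := by
  unfold Da Ia Ma Ja
  have hP : (0:ℝ) < (p:ℝ) ^ (L.length + 1) := by
    have : (0:ℝ) < (p:ℝ) := by exact_mod_cast hp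
    positivity
  have h1 : (0:ℝ) ≤ (m₀ : ℝ) / (p : ℝ) ^ (L.length + 1) := by positivity
  have h2 : (m₀ : ℝ) / (p : ℝ) ^ (L.length + 1) ≤
      ((m₀ + q : ℕ) : ℝ) / (p : ℝ) ^ (L.length + 1) := by
    have hle : (m₀ : ℝ) ≤ ((m₀ + q : ℕ) : ℝ) := by
      push_cast; linarith [Nat.cast_nonneg (α := ℝ) q]
    gcongr
  have h3 : ((m₀ + q : ℕ) : ℝ) / (p : ℝ) ^ (L.length + 1) ≤ 1 / (p : ℝ) ^ L.length :=
    div_pow_le hp (by omega) _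
  rw [Set.Ico_union_Ico_eq_Ico (by linarith) (by linarith),
    Set.Ico_union_Ico_eq_Ico (by linarith) (by linarith)]

lemma Ma_disjoint_IJ (L : List ℕ) :
    Disjoint (Ma p m₀ q L) (Ia p m₀ L ∪ Ja p m₀ q L) := by
  rw [Set.disjoint_union_right]
  constructor
  · unfold Ma Ia
    rw [Set.Ico_disjoint_Ico]
    exact le_trans (min_le_right _ _) (le_max_left _ _)
  · unfold Ma Ja
    rw [Set.Ico_disjoint_Ico]
    exact le_trans (min_le_left _ _) (le_max_right _ _)

lemma unionIco (a u : ℝ) (hu : 0 < u) (c : ℕ) : ∀ Q : ℕ,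
    (⋃ d ∈ Finset.range Q, Ico (a + ((c:ℝ) + d) * u) (a + ((c:ℝ) + d + 1) * u)) =
      Ico (a + (c:ℝ) * u) (a + ((c:ℝ) + Q) * u) := by
  intro Q
  induction Q with
  | zero => simp
  | succ Q ih =>
    rw [Finset.range_add_one, Finset.set_biUnion_insert, ih, Set.union_comm,
      Set.Ico_union_Ico_eq_Ico (by nlinarith [Nat.cast_nonneg (α := ℝ) Q])
        (by nlinarith)]
    congr 1
    push_cast
    ring

lemma Ma_eq_children (hp : 0 < p) (L : List ℕ) :
    Ma p m₀ q L = ⋃ d ∈ Finset.range q, Da p m₀ (L ++ [d]) := by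
  have hp' : (0:ℝ) < (p:ℝ) := by exact_mod_cast hp
  have hu : (0:ℝ) < ((p:ℝ) ^ (L.length + 1))⁻¹ := by positivity
  have e1 : Ma p m₀ q L = Ico (sf p m₀ L + (m₀:ℝ) * ((p:ℝ) ^ (L.length + 1))⁻¹)
      (sf p m₀ L + ((m₀:ℝ) + q) * ((p:ℝ) ^ (L.length + 1))⁻¹) := by
    unfold Ma
    have h1 : sf p m₀ L + (m₀:ℝ) * ((p:ℝ) ^ (L.length + 1))⁻¹ =
        sf p m₀ L + (m₀:ℝ) / (p:ℝ) ^ (L.length + 1) := by ring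
    have h2 : sf p m₀ L + ((m₀:ℝ) + q) * ((p:ℝ) ^ (L.length + 1))⁻¹ =
        sf p m₀ L + ((m₀ + q : ℕ):ℝ) / (p:ℝ) ^ (L.length + 1) := by push_cast; ring
    rw [h1, h2]
  have e2 : ∀ d : ℕ, Da p m₀ (L ++ [d]) =
      Ico (sf p m₀ L + ((m₀:ℝ) + d) * ((p:ℝ) ^ (L.length + 1))⁻¹)
        (sf p m₀ L + ((m₀:ℝ) + d + 1) * ((p:ℝ) ^ (L.length + 1))⁻¹) := by
    intro d
    unfold Da
    rw [sf_concat, List.length_append, List.length_singleton]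
    have h1 : sf p m₀ L + ((m₀:ℝ) + d) * ((p:ℝ) ^ (L.length + 1))⁻¹ =
        sf p m₀ L + ((m₀:ℝ) + d) / (p:ℝ) ^ (L.length + 1) := by ring
    have h2 : sf p m₀ L + ((m₀:ℝ) + d + 1) * ((p:ℝ) ^ (L.length + 1))⁻¹ =
        sf p m₀ L + ((m₀:ℝ) + d) / (p:ℝ) ^ (L.length + 1) + 1 / (p:ℝ) ^ (L.length + 1) := by
      ring
    rw [h1, h2]
  rw [e1, ← unionIco (sf p m₀ L) _ hu m₀ q]
  exact Set.iUnion₂_congr fun d _ => (e2 d).symm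

lemma Da_disjoint (hp : 0 < p) (hsum : m₀ + q + m₀ = p) {L L' : List ℕ}
    (hlen : L.length = L'.length) (hL : ∀ x ∈ L, x < q) (hL' : ∀ x ∈ L', x < q)
    (hne : L ≠ L') : Disjoint (Da p m₀ L) (Da p m₀ L') := by
  have hp' : (0:ℝ) < (p:ℝ) := by exact_mod_cast hp
  set N := val p (L.map (· + m₀)) with hN
  set N' := val p (L'.map (· + m₀)) with hN'
  have hdig : ∀ x ∈ L.map (· + m₀), x < p := by
    intro x hx
    obtain ⟨y, hy, rfl⟩ := List.mem_map.mp hx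
    have := hL y hy; omega
  have hdig' : ∀ x ∈ L'.map (· + m₀), x < p := by
    intro x hx
    obtain ⟨y, hy, rfl⟩ := List.mem_map.mp hx
    have := hL' y hy; omega
  have hNN : N ≠ N' := by
    intro h
    apply hne
    exact List.map_injective_iff.mpr (add_left_injective m₀)
      (val_inj p _ _ (by simp [hlen]) hdig hdig' h)
  have hDa : Da p m₀ L = Ico ((N:ℝ) / (p:ℝ) ^ L.length) (((N:ℝ) + 1) / (p:ℝ) ^ L.length) := by
    unfold Da sf
    rw [padicSum_eq_val p hp, List.length_map, ← add_div]
  have hDa' : Da p m₀ L' = Ico ((N':ℝ) / (p:ℝ) ^ L.length) (((N':ℝ) + 1) / (p:ℝ) ^ L.length) := by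
    unfold Da sf
    rw [padicSum_eq_val p hp, List.length_map, ← add_div, hlen]
  rw [hDa, hDa', Set.Ico_disjoint_Ico]
  have hPpos : (0:ℝ) < (p:ℝ) ^ L.length := by positivity
  rcases hNN.lt_or_gt with h | h
  · have hle : ((N:ℝ) + 1) / (p:ℝ) ^ L.length ≤ (N':ℝ) / (p:ℝ) ^ L.length := by
      have h2 : ((N:ℝ) + 1) ≤ (N':ℝ) := by exact_mod_cast h
      gcongr
    exact le_trans (min_le_left _ _) (le_trans hle (le_max_right _ _))
  · have hle : ((N':ℝ) + 1) / (p:ℝ) ^ L.length ≤ (N:ℝ) / (p:ℝ) ^ L.length := by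
      have h2 : ((N':ℝ) + 1) ≤ (N:ℝ) := by exact_mod_cast h
      gcongr
    exact le_trans (min_le_right _ _) (le_trans hle (le_max_left _ _))

/-! ### The sets of lists -/

def Tset (q k : ℕ) : Set (List ℕ) := {L | L.length = k ∧ ∀ x ∈ L, x < q}

def Sset (q k : ℕ) : Set (List ℕ) := {L | L ≠ [] ∧ L.length ≤ k ∧ ∀ x ∈ L, x < q}

lemma main_set (hp : 0 < p) (hsum : m₀ + q + m₀ = p) (k : ℕ) :
    Ma p m₀ q [] \ (⋃ L ∈ Sset q k, (Ia p m₀ L ∪ Ja p m₀ q L)) =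
      ⋃ L ∈ Tset q k, Ma p m₀ q L := by
  induction k with
  | zero =>
    have h1 : Sset q 0 = ∅ := by
      ext L
      constructor
      · rintro ⟨ha, hb, -⟩
        exact absurd (List.eq_nil_of_length_eq_zero (Nat.le_zero.mp hb)) ha
      · exact fun h => h.elim
    have h2 : Tset q 0 = {[]} := by
      ext L
      simp only [Tset, Set.mem_setOf_eq, Set.mem_singleton_iff]
      constructor
      · rintro ⟨h, -⟩; exact List.eq_nil_of_length_eq_zero h
      · rintro rfl; simp
    rw [h1, h2]
    simp
  | succ k ih =>
    have hsplit : Sset q (k + 1) = Sset q k ∪ Tset q (k + 1) := by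
      ext L
      simp only [Sset, Tset, Set.mem_setOf_eq, Set.mem_union]
      constructor
      · rintro ⟨h1, h2, h3⟩
        rcases Nat.lt_or_ge L.length (k + 1) with h | h
        · exact Or.inl ⟨h1, by omega, h3⟩
        · exact Or.inr ⟨by omega, h3⟩
      · rintro (⟨h1, h2, h3⟩ | ⟨h1, h2⟩)
        · exact ⟨h1, by omega, h3⟩
        · refine ⟨?_, by omega, h2⟩
          intro h; rw [h] at h1; simp at h1
    rw [hsplit, Set.biUnion_union, ← Set.diff_diff, ih]
    ext x
    simp only [Set.mem_diff, Set.mem_iUnion, exists_prop]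
    constructor
    · rintro ⟨⟨L, hL, hx⟩, hnv⟩
      rw [Ma_eq_children hp] at hx
      simp only [Set.mem_iUnion, exists_prop, Finset.mem_range] at hx
      obtain ⟨d, hd, hxd⟩ := hx
      have hmem : L ++ [d] ∈ Tset q (k + 1) := by
        refine ⟨by simp [hL.1], fun y hy => ?_⟩
        rcases List.mem_append.mp hy with h | h
        · exact hL.2 y h
        · simp only [List.mem_singleton] at h; omega
      rw [Da_partition hp hsum] at hxd
      rcases hxd with (hxd | hxd) | hxd
      · exact absurd ⟨L ++ [d], hmem, Or.inl hxd⟩ hnv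
      · exact ⟨L ++ [d], hmem, hxd⟩
      · exact absurd ⟨L ++ [d], hmem, Or.inr hxd⟩ hnv
    · rintro ⟨L', hL', hx⟩
      have hne : L' ≠ [] := by
        intro h
        rw [h] at hL'
        have := hL'.1
        simp at this
      obtain ⟨L, d, rfl⟩ : ∃ L d, L' = L ++ [d] :=
        ⟨L'.dropLast, L'.getLast hne, (List.dropLast_append_getLast hne).symm⟩
      have hLlen : L.length = k := by
        have := hL'.1; simp only [List.length_append, List.length_singleton] at this; omega
      have hLdig : ∀ x ∈ L, x < q := fun x hx => hL'.2 x (by simp [hx])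
      have hdq : d < q := hL'.2 d (by simp)
      have hxDa : x ∈ Da p m₀ (L ++ [d]) := Ma_subset_Da hp hsum _ hx
      constructor
      · refine ⟨L, ⟨hLlen, hLdig⟩, ?_⟩
        rw [Ma_eq_children hp]
        simp only [Set.mem_iUnion, exists_prop, Finset.mem_range]
        exact ⟨d, hdq, hxDa⟩
      · rintro ⟨L'', hL'', hxIJ⟩
        by_cases hcase : L'' = L ++ [d]
        · subst hcase
          exact (Ma_disjoint_IJ _).le_bot ⟨hx, hxIJ⟩
        · have hxDa'' : x ∈ Da p m₀ L'' := by
            rcases hxIJ with h | h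
            · exact Ia_subset_Da hp hsum _ h
            · exact Ja_subset_Da hp hsum _ h
          have hlen'' : (L ++ [d]).length = L''.length := by
            simp only [List.length_append, List.length_singleton]
            rw [hL''.1, hLlen]
          have hdig'' : ∀ y ∈ L ++ [d], y < q := by
            intro y hy
            rcases List.mem_append.mp hy with h | h
            · exact hLdig y h
            · simp only [List.mem_singleton] at h; omega
          have hdisj := Da_disjoint hp hsum hlen'' hdig'' hL''.2
            (fun h => hcase h.symm)
          exact hdisj.le_bot ⟨hxDa, hxDa''⟩

/-! ### The finset of lists and the measure computation -/

def Fs (q : ℕ) : ℕ → Finset (List ℕ)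
  | 0 => {[]}
  | (k + 1) => (Fs q k).biUnion fun L => (Finset.range q).image fun d => L ++ [d]

lemma mem_Fs (q k : ℕ) (L : List ℕ) : L ∈ Fs q k ↔ L.length = k ∧ ∀ x ∈ L, x < q := by
  induction k generalizing L with
  | zero =>
    simp only [Fs, Finset.mem_singleton]
    constructor
    · rintro rfl; simp
    · rintro ⟨h, -⟩; exact List.eq_nil_of_length_eq_zero h
  | succ k ih =>
    simp only [Fs, Finset.mem_biUnion, Finset.mem_image, Finset.mem_range]
    constructor
    · rintro ⟨A, hA, d, hd, rfl⟩
      rw [ih] at hA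
      refine ⟨by simp [hA.1], fun y hy => ?_⟩
      rcases List.mem_append.mp hy with h | h
      · exact hA.2 y h
      · simp only [List.mem_singleton] at h; omega
    · rintro ⟨h1, h2⟩
      have hne : L ≠ [] := by
        intro h; rw [h] at h1; simp at h1
      refine ⟨L.dropLast, ?_, L.getLast hne, h2 _ (List.getLast_mem hne), ?_⟩
      · rw [ih]
        refine ⟨?_, fun x hx => h2 x (List.dropLast_subset L hx)⟩
        rw [List.length_dropLast, h1]
        omega
      · exact List.dropLast_append_getLast hne
    
lemma card_Fs (q k : ℕ) : (Fs q k).card = q ^ k := by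
  induction k with
  | zero => simp [Fs]
  | succ k ih =>
    rw [show Fs q (k + 1) = (Fs q k).biUnion fun L => (Finset.range q).image
        fun d => L ++ [d] from rfl]
    rw [Finset.card_biUnion]
    · have hcard : ∀ L ∈ Fs q k, ((Finset.range q).image fun d => L ++ [d]).card = q := by
        intro L _
        rw [Finset.card_image_of_injective _ fun a b h => by simpa using h,
          Finset.card_range]
      rw [Finset.sum_congr rfl hcard, Finset.sum_const, ih, smul_eq_mul, pow_succ]
    · intro L hL L' hL' hne
      rw [Function.onFun, Finset.disjoint_left]
      rintro x hx hx'
      simp only [Finset.mem_image, Finset.mem_range] at hx hx'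
      obtain ⟨d, -, rfl⟩ := hx
      obtain ⟨e, -, heq⟩ := hx'
      apply hne
      have := congrArg List.dropLast heq
      simpa using this.symm

lemma Tset_coe (q k : ℕ) : Tset q k = ↑(Fs q k) := by
  ext L
  rw [Finset.mem_coe, mem_Fs]
  rfl

lemma measure_Mset (hp : 0 < p) (hsum : m₀ + q + m₀ = p) (k : ℕ) :
    volume (⋃ L ∈ Tset q k, Ma p m₀ q L) =
      ENNReal.ofReal (((q : ℝ) / (p : ℝ)) ^ (k + 1)) := by
  have hp' : (0:ℝ) < (p:ℝ) := by exact_mod_cast hp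
  rw [Tset_coe, Finset.set_biUnion_coe]
  rw [measure_biUnion_finset]
  · have hvol : ∀ L ∈ Fs q k, volume (Ma p m₀ q L) =
        ENNReal.ofReal ((q : ℝ) / (p : ℝ) ^ (k + 1)) := by
      intro L hL
      have hlen : L.length = k := ((mem_Fs q k L).mp hL).1
      unfold Ma
      rw [Real.volume_Ico, hlen]
      congr 1
      push_cast
      ring
    rw [Finset.sum_congr rfl hvol, Finset.sum_const, card_Fs, nsmul_eq_mul,
      ← ENNReal.ofReal_natCast (q ^ k), ← ENNReal.ofReal_mul (by positivity)]
    congr 1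
    push_cast
    rw [div_pow]
    field_simp
    ring
  · intro L hL L' hL' hne
    have hL1 := (mem_Fs q k L).mp (Finset.mem_coe.mp hL)
    have hL2 := (mem_Fs q k L').mp (Finset.mem_coe.mp hL')
    exact (Da_disjoint hp hsum (by rw [hL1.1, hL2.1]) hL1.2 hL2.2 hne).mono
      (Ma_subset_Da hp hsum L) (Ma_subset_Da hp hsum L')
  · exact fun L _ => measurableSet_Ico

end AkAux

theorem measure_Ak_odd (n p m₀ : ℕ) (hn : 3 ≤ n) (hodd : Odd n) (hpodd : Odd p)
    (hp : (n : ℤ) - 2 < p) (hm : 2 * m₀ + n = p + 2) (k : ℕ) (hk : 1 ≤ k) :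
    MeasureTheory.volume
      (Set.Ico ((1 : ℝ) / 2 - ((n : ℝ) - 2) / (2 * p))
          ((1 : ℝ) / 2 + ((n : ℝ) - 2) / (2 * p)) \
        ⋃ L ∈ {L : List ℕ | L ≠ [] ∧ L.length ≤ k ∧ ∀ x ∈ L, x ≤ n - 3},
          (Set.Ico (padicSum p (L.map (· + m₀)))
              (padicSum p (L.map (· + m₀)) + (m₀ : ℝ) / (p : ℝ) ^ (L.length + 1)) ∪
           Set.Ico (padicSum p (L.map (· + m₀))
              + ((m₀ + n - 2 : ℕ) : ℝ) / (p : ℝ) ^ (L.length + 1))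
              (padicSum p (L.map (· + m₀)) + 1 / (p : ℝ) ^ L.length)))
      = ENNReal.ofReal ((((n : ℝ) - 2) / p) ^ (k + 1)) := by
  classical
  set q : ℕ := n - 2 with hq
  have hp0 : 0 < p := by omega
  have hsum : m₀ + q + m₀ = p := by omega
  have hp' : (0:ℝ) < (p:ℝ) := by exact_mod_cast hp0
  have hmr : 2 * (m₀ : ℝ) + (n : ℝ) = (p : ℝ) + 2 := by exact_mod_cast hm
  have hqr : (q : ℝ) = (n : ℝ) - 2 := by
    rw [hq]; push_cast [Nat.cast_sub (by omega : 2 ≤ n)]; ring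
  have hIco : Set.Ico ((1 : ℝ) / 2 - ((n : ℝ) - 2) / (2 * p))
      ((1 : ℝ) / 2 + ((n : ℝ) - 2) / (2 * p)) = AkAux.Ma p m₀ q [] := by
    have hne : (p:ℝ) ≠ 0 := ne_of_gt hp'
    have ea : (1:ℝ)/2 - ((n:ℝ)-2)/(2*p) = (m₀:ℝ)/p := by
      field_simp
      linear_combination (-1:ℝ) * hmr
    have eb : (1:ℝ)/2 + ((n:ℝ)-2)/(2*p) = ((m₀ + q : ℕ):ℝ)/p := by
      push_cast
      rw [hqr]
      field_simp
      linear_combination (-1:ℝ) * hmr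
    unfold AkAux.Ma
    rw [AkAux.sf_nil]
    simp only [List.length_nil, zero_add, pow_one]
    rw [ea, eb]
  have hsets : {L : List ℕ | L ≠ [] ∧ L.length ≤ k ∧ ∀ x ∈ L, x ≤ n - 3} =
      AkAux.Sset q k := by
    ext L
    simp only [Set.mem_setOf_eq, AkAux.Sset]
    constructor
    · rintro ⟨h1, h2, h3⟩
      exact ⟨h1, h2, fun x hx => by have := h3 x hx; omega⟩
    · rintro ⟨h1, h2, h3⟩
      exact ⟨h1, h2, fun x hx => by have := h3 x hx; omega⟩
  have hbody : ∀ L : List ℕ,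
      (Set.Ico (padicSum p (L.map (· + m₀)))
          (padicSum p (L.map (· + m₀)) + (m₀ : ℝ) / (p : ℝ) ^ (L.length + 1)) ∪
       Set.Ico (padicSum p (L.map (· + m₀))
          + ((m₀ + n - 2 : ℕ) : ℝ) / (p : ℝ) ^ (L.length + 1))
          (padicSum p (L.map (· + m₀)) + 1 / (p : ℝ) ^ L.length)) =
      AkAux.Ia p m₀ L ∪ AkAux.Ja p m₀ q L := by
    intro L
    have hnat : m₀ + n - 2 = m₀ + q := by omega
    rw [hnat]
    rfl
  rw [hIco, hsets,
    show (⋃ L ∈ AkAux.Sset q k,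
        (Set.Ico (padicSum p (L.map (· + m₀)))
            (padicSum p (L.map (· + m₀)) + (m₀ : ℝ) / (p : ℝ) ^ (L.length + 1)) ∪
         Set.Ico (padicSum p (L.map (· + m₀))
            + ((m₀ + n - 2 : ℕ) : ℝ) / (p : ℝ) ^ (L.length + 1))
            (padicSum p (L.map (· + m₀)) + 1 / (p : ℝ) ^ L.length))) =
        ⋃ L ∈ AkAux.Sset q k, (AkAux.Ia p m₀ L ∪ AkAux.Ja p m₀ q L) from
      Set.iUnion₂_congr fun L _ => hbody L,
    AkAux.main_set hp0 hsum k, AkAux.measure_Mset hp0 hsum k, hqr]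
end

section
/- Fix an integer n ≥ 3 and for j ≥ 0 let L_j = (2j+n)(j+1)(j+2)⋯(j+n−1)/n! (so L₀ = 1). Define real polynomials z_i and y_i (0 ≤ i ≤ n−1) recursively by: z₀(x) = 2xⁿ/n!; z_i(x) = 2(x+i)ⁿ/n! − Σ_{j=1}^{i} L_j · z_{i−j}(x) for i ≥ 1; and y_{n−1}(x) = 2(1−x)ⁿ/n!; y_i(x) = 2(n−i−x)ⁿ/n! − Σ_{j=i+1}^{n−1} L_{j−i} · y_j(x) for i < n−1. Then for every j with 0 ≤ j ≤ ⌈n/2⌉ − 2, the polynomial identity z_j(x) = y_{n−1−j}(1−x) holds. -/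
open Polynomial in
theorem Z_Y_symmetry (n : ℕ) (hn : 3 ≤ n) (L : ℕ → ℝ)
    (hL : ∀ j : ℕ, L j = (2 * j + n) *
      (∏ i ∈ Finset.range (n - 1), ((j : ℝ) + 1 + i)) / n.factorial)
    (z y : ℕ → Polynomial ℝ)
    (hz0 : z 0 = C (2 / (n.factorial : ℝ)) * X ^ n)
    (hz : ∀ i : ℕ, 1 ≤ i → i ≤ n - 1 →
      z i = C (2 / (n.factorial : ℝ)) * (X + C (i : ℝ)) ^ n
            - ∑ j ∈ Finset.Icc 1 i, C (L j) * z (i - j))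
    (hyTop : y (n - 1) = C (2 / (n.factorial : ℝ)) * (1 - X) ^ n)
    (hy : ∀ i : ℕ, i < n - 1 →
      y i = C (2 / (n.factorial : ℝ)) * (C ((n : ℝ) - i) - X) ^ n
            - ∑ j ∈ Finset.Icc (i + 1) (n - 1), C (L (j - i)) * y j) :
    ∀ j : ℕ, j + 2 ≤ (n + 1) / 2 →
      z j = (y (n - 1 - j)).comp (1 - X) := by
  have key : ∀ j : ℕ, j ≤ n - 1 → z j = (y (n - 1 - j)).comp (1 - X) := by
    intro j
    induction j using Nat.strong_induction_on with
    | _ j ih =>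
      intro hj
      rcases Nat.eq_zero_or_pos j with rfl | hjpos
      · rw [Nat.sub_zero, hz0, hyTop]
        simp [sub_sub_cancel]
      · have hlt : n - 1 - j < n - 1 := by omega
        rw [hz j hjpos hj, hy (n - 1 - j) hlt]
        simp only [sub_comp, mul_comp, C_comp, pow_comp, one_comp, X_comp]
        congr 1
        · congr 2
          have : ((n - 1 - j : ℕ) : ℝ) = (n : ℝ) - 1 - j := by
            push_cast [Nat.cast_sub (by omega : j ≤ n - 1),
              Nat.cast_sub (by omega : 1 ≤ n)]
            ring
          rw [this, show (n:ℝ) - ((n:ℝ) - 1 - j) = 1 + j by ring, C_add, C_1]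
          ring
        · rw [Polynomial.sum_comp]
          refine Finset.sum_nbij' (fun m => m + (n - 1 - j))
            (fun k => k - (n - 1 - j)) ?_ ?_ ?_ ?_ ?_
          · intro m hm
            simp only [Finset.mem_Icc] at hm ⊢
            omega
          · intro k hk
            simp only [Finset.mem_Icc] at hk ⊢
            omega
          · intro m hm
            simp only [Finset.mem_Icc] at hm
            omega
          · intro k hk
            simp only [Finset.mem_Icc] at hk
            omega
          · intro m hm
            simp only [Finset.mem_Icc] at hm
            have h1 : m + (n - 1 - j) - (n - 1 - j) = m := by omega
            have h2 : m + (n - 1 - j) = n - 1 - (j - m) := by omega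
            rw [h1, h2, mul_comp, C_comp, ← ih (j - m) (by omega) (by omega)]
  intro j hj
  exact key j (by omega)
end

section
/- Let n ≥ 3, let p ≥ 3 be an integer with p > 2, let s ≥ 1, and set q = p^s, n₀ = ⌈(n−2)(p−1)/(2p)⌉ and Δ = n₀ − (n−2)(p−1)/(2p). Suppose integers a and t satisfy 1−n ≤ a < q and ((n−2)(p−1)/2)·(q/p) ≤ a − tq ≤ ((n−2)(p−1)/2 + n − 2 + p)·(q/p) − n. Then n₀ − 1 ≤ −t ≤ n₀ + ⌈(n−2)/p⌉. In particular, if p > n−2 then −t ∈ {n₀−1, n₀, n₀+1}. -/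
theorem spinor_twist_bounds (n p s : ℕ) (hn : 3 ≤ n) (hp : 2 < p) (hs : 1 ≤ s)
    (a t : ℤ) (ha1 : 1 - (n : ℤ) ≤ a) (ha2 : a < (p : ℤ) ^ s)
    (h1 : (((n : ℚ) - 2) * ((p : ℚ) - 1) / 2) * ((p : ℚ) ^ s / p)
            ≤ (a : ℚ) - (t : ℚ) * (p : ℚ) ^ s)
    (h2 : (a : ℚ) - (t : ℚ) * (p : ℚ) ^ s
            ≤ (((n : ℚ) - 2) * ((p : ℚ) - 1) / 2 + (n : ℚ) - 2 + p)
                * ((p : ℚ) ^ s / p) - n) :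
    (⌈((n : ℚ) - 2) * ((p : ℚ) - 1) / (2 * p)⌉ - 1 ≤ -t ∧
      -t ≤ ⌈((n : ℚ) - 2) * ((p : ℚ) - 1) / (2 * p)⌉ + ⌈((n : ℚ) - 2) / p⌉) ∧
    ((n : ℤ) - 2 < p →
      -t = ⌈((n : ℚ) - 2) * ((p : ℚ) - 1) / (2 * p)⌉ - 1 ∨
      -t = ⌈((n : ℚ) - 2) * ((p : ℚ) - 1) / (2 * p)⌉ ∨
      -t = ⌈((n : ℚ) - 2) * ((p : ℚ) - 1) / (2 * p)⌉ + 1) := by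
  have hp0 : (0:ℚ) < p := by exact_mod_cast (by omega : 0 < p)
  have hpne : (p:ℚ) ≠ 0 := ne_of_gt hp0
  have hq0 : (0:ℚ) < (p:ℚ)^s := pow_pos hp0 s
  set x : ℚ := ((n:ℚ)-2)*((p:ℚ)-1)/(2*p) with hx
  have ha2' : (a:ℚ) < (p:ℚ)^s := by exact_mod_cast ha2
  have ha1' : (1:ℚ) - (n:ℚ) ≤ (a:ℚ) := by exact_mod_cast ha1
  -- lower bound in ℚ
  have key1 : x - 1 < -(t:ℚ) := by
    have h : (x - 1) * (p:ℚ)^s < (-(t:ℚ)) * (p:ℚ)^s := by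
      have e : (x - 1) * (p:ℚ)^s
          = (((n:ℚ)-2)*((p:ℚ)-1)/2) * ((p:ℚ)^s/p) - (p:ℚ)^s := by
        rw [hx]; field_simp
      rw [e]; linarith
    exact lt_of_mul_lt_mul_right h hq0.le
  have key2 : -(t:ℚ) < x + ((n:ℚ)-2)/p + 1 := by
    have h : (-(t:ℚ)) * (p:ℚ)^s < (x + ((n:ℚ)-2)/p + 1) * (p:ℚ)^s := by
      have e : (x + ((n:ℚ)-2)/p + 1) * (p:ℚ)^s
          = (((n:ℚ)-2)*((p:ℚ)-1)/2 + (n:ℚ) - 2 + p) * ((p:ℚ)^s/p) := by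
        rw [hx]; field_simp; ring
      rw [e]; linarith
    exact lt_of_mul_lt_mul_right h hq0.le
  have hlow : ⌈x⌉ - 1 ≤ -t := by
    have h1' : ((⌈x⌉ - 2 : ℤ) : ℚ) < ((-t : ℤ) : ℚ) := by
      push_cast
      have := Int.ceil_lt_add_one x
      linarith [Int.ceil_lt_add_one x]
    have : ⌈x⌉ - 2 < -t := by exact_mod_cast h1'
    omega
  have hhigh : -t ≤ ⌈x⌉ + ⌈((n:ℚ)-2)/p⌉ := by
    have h2' : ((-t : ℤ) : ℚ) < ((⌈x⌉ + ⌈((n:ℚ)-2)/p⌉ + 1 : ℤ) : ℚ) := by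
      push_cast
      linarith [Int.le_ceil x, Int.le_ceil (((n:ℚ)-2)/p)]
    have : -t < ⌈x⌉ + ⌈((n:ℚ)-2)/p⌉ + 1 := by exact_mod_cast h2'
    omega
  refine ⟨⟨hlow, hhigh⟩, fun hnp => ?_⟩
  have hceil1 : ⌈((n:ℚ)-2)/p⌉ = 1 := by
    have hnp' : (n:ℚ) - 2 ≤ p := by
      have : (n:ℤ) - 2 ≤ p := le_of_lt hnp
      exact_mod_cast this
    have hpos : 0 < ((n:ℚ)-2)/p := by
      apply div_pos _ hp0
      have : (3:ℚ) ≤ n := by exact_mod_cast hn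
      linarith
    have hle : ((n:ℚ)-2)/p ≤ 1 := by
      rw [div_le_one hp0]; exact hnp'
    have u : ⌈((n:ℚ)-2)/p⌉ ≤ 1 := Int.ceil_le.mpr (by exact_mod_cast hle)
    have l : 0 < ⌈((n:ℚ)-2)/p⌉ := Int.ceil_pos.mpr hpos
    omega
  rw [hceil1] at hhigh
  omega
end
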